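/- For an ε-space, the skew-symmetric curvature operator R(π) of any nondegenerate oriented 2-plane is three-step nilpotent (R(π)³ = 0), hence all ε-spaces are Ivanov–Petrova manifolds. -/
import Mathlib


noncomputable section

/-- Partial derivative of a function on `ℝⁿ` in the `a`-th coordinate direction. -/
def pd {N : ℕ} (a : Fin N) (h : (Fin N → ℝ) → ℝ) (x : Fin N → ℝ) : ℝ :=
  deriv (fun t => h (Function.update x a t)) (x a)

/-- The index of the coordinate `x_n` (dimension `n = m+3`). -/
def lastIdx (m : ℕ) : Fin (m + 3) := ⟨m + 2, by omega⟩

/-- The index of the coordinate `x_{n-1}`. -/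
def penIdx (m : ℕ) : Fin (m + 3) := ⟨m + 1, by omega⟩

/-- The ε-metric `g_ε = Σ_{i=1}^{n-2} (dx_i)² - dx_{n-1} dx_n + ε(Σ x_i²)(dx_{n-1})²`. -/
def gEps (m : ℕ) (ε : ℝ) (x : Fin (m + 3) → ℝ) (i j : Fin (m + 3)) : ℝ :=
  if i = j ∧ (i : ℕ) < m + 1 then 1
  else if i = penIdx m ∧ j = penIdx m then
    ε * ∑ k : Fin (m + 3), (if (k : ℕ) < m + 1 then (x k) ^ 2 else 0)
  else if (i = penIdx m ∧ j = lastIdx m) ∨ (i = lastIdx m ∧ j = penIdx m) then -(1 / 2)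
  else 0

/-- Christoffel symbols of the ε-metric: `∇_{∂_i}∂_{n-1} = -2εx_i ∂_n` for spatial `i`,
`∇_{∂_{n-1}}∂_{n-1} = -ε Σ_k x_k ∂_k`, all others zero. -/
def ΓEps (m : ℕ) (ε : ℝ) (x : Fin (m + 3) → ℝ) (k i j : Fin (m + 3)) : ℝ :=
  if (i : ℕ) < m + 1 ∧ j = penIdx m ∧ k = lastIdx m then -(2 * ε * x i)
  else if (j : ℕ) < m + 1 ∧ i = penIdx m ∧ k = lastIdx m then -(2 * ε * x j)
  else if i = penIdx m ∧ j = penIdx m ∧ (k : ℕ) < m + 1 then -(ε * x k)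
  else 0

/-- Component on `∂_l` of `R(∂_i,∂_j)∂_k`, convention `R(X,Y) = ∇_{[X,Y]} - [∇_X, ∇_Y]`. -/
def RopEps (m : ℕ) (ε : ℝ) (x : Fin (m + 3) → ℝ) (i j k l : Fin (m + 3)) : ℝ :=
  -(pd i (fun y => ΓEps m ε y l j k) x - pd j (fun y => ΓEps m ε y l i k) x
    + ∑ s, (ΓEps m ε x l i s * ΓEps m ε x s j k - ΓEps m ε x l j s * ΓEps m ε x s i k))

/-- The (0,4)-curvature tensor of the ε-metric. -/
def R4Eps (m : ℕ) (ε : ℝ) (x : Fin (m + 3) → ℝ) (i j k h : Fin (m + 3)) : ℝ :=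
  ∑ l, RopEps m ε x i j k l * gEps m ε x l h

/-- Ricci tensor `Ric(X,Y) = trace (Z ↦ R(X,Z)Y)` of the ε-metric. -/
def RicEps (m : ℕ) (ε : ℝ) (x : Fin (m + 3) → ℝ) (i j : Fin (m + 3)) : ℝ :=
  ∑ k, RopEps m ε x i k j k

/-- Covariant derivative `(∇_{∂_a} R)(∂_i,∂_j,∂_k,∂_h)` of the (0,4)-curvature tensor. -/
def covR4Eps (m : ℕ) (ε : ℝ) (x : Fin (m + 3) → ℝ) (a i j k h : Fin (m + 3)) : ℝ :=
  pd a (fun y => R4Eps m ε y i j k h) x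
    - ∑ s, (ΓEps m ε x s a i * R4Eps m ε x s j k h + ΓEps m ε x s a j * R4Eps m ε x i s k h
      + ΓEps m ε x s a k * R4Eps m ε x i j s h + ΓEps m ε x s a h * R4Eps m ε x i j k s)

/-- The matrix of the curvature operator `R(u,v)` in the coordinate frame. -/
def RMatEps (m : ℕ) (ε : ℝ) (x : Fin (m + 3) → ℝ) (u v : Fin (m + 3) → ℝ) :
    Matrix (Fin (m + 3)) (Fin (m + 3)) ℝ :=
  Matrix.of fun l k => ∑ i, ∑ j, u i * v j * RopEps m ε x i j k l

/-- The inner product of tangent vectors with respect to the ε-metric. -/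
def gdotEps (m : ℕ) (ε : ℝ) (x : Fin (m + 3) → ℝ) (u v : Fin (m + 3) → ℝ) : ℝ :=
  ∑ i, ∑ j, gEps m ε x i j * u i * v j


section AuxIP

lemma Γmul_zero (m : ℕ) (ε : ℝ) (x : Fin (m+3) → ℝ) {i j : Fin (m+3)} (hij : i ≠ j)
    (l s k : Fin (m+3)) : ΓEps m ε x l i s * ΓEps m ε x s j k = 0 := by
  have hij' : (i : ℕ) ≠ (j : ℕ) := fun h => hij (Fin.ext h)
  unfold ΓEps
  split_ifs <;>
    first
      | ring1
      | (exfalso; simp only [Fin.ext_iff, penIdx, lastIdx, Fin.val_mk] at *; omega)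

lemma Γ_closed (m : ℕ) (ε : ℝ) {k l : Fin (m+3)}
    (h1 : ¬((l:ℕ) < m + 1 ∧ k = penIdx m))
    (h2 : ¬(l = lastIdx m ∧ (k : ℕ) < m + 1)) (j : Fin (m+3)) (y : Fin (m+3) → ℝ) :
    ΓEps m ε y l j k =
      if ((j:ℕ) < m + 1 ∧ k = penIdx m ∧ l = lastIdx m) then -(2*ε) * y j else 0 := by
  unfold ΓEps
  split_ifs <;>
    first
      | ring1
      | (exfalso; simp only [Fin.ext_iff, penIdx, lastIdx, Fin.val_mk, not_and, not_lt] at *;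
          omega)

lemma pd_lin (m : ℕ) (c : ℝ) (x : Fin (m+3) → ℝ) (i j : Fin (m+3)) (P : Prop) [Decidable P] :
    pd i (fun y => if P then c * y j else 0) x = if P ∧ i = j then c else 0 := by
  by_cases hP : P
  · simp only [if_pos hP, hP, true_and]
    by_cases hij : i = j
    · subst hij
      simp only [if_pos rfl, pd, Function.update_self]
      exact ((hasDerivAt_id (x i)).const_mul c).deriv.trans (mul_one c)
    · simp only [if_neg hij, pd, Function.update_of_ne (Ne.symm hij)]
      exact deriv_const _ _
  · simp [pd, hP]

lemma Rop_vanish (m : ℕ) (ε : ℝ) (x : Fin (m+3) → ℝ) (i j k l : Fin (m+3))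
    (h1 : ¬((l:ℕ) < m + 1 ∧ k = penIdx m))
    (h2 : ¬(l = lastIdx m ∧ (k : ℕ) < m + 1)) :
    RopEps m ε x i j k l = 0 := by
  unfold RopEps
  have hsum : ∀ s : Fin (m+3), s ∈ Finset.univ →
      ΓEps m ε x l i s * ΓEps m ε x s j k - ΓEps m ε x l j s * ΓEps m ε x s i k = 0 := by
    intro s _
    by_cases hij : i = j
    · subst hij; ring
    · rw [Γmul_zero m ε x hij, Γmul_zero m ε x (Ne.symm hij)]; ring
  rw [Finset.sum_eq_zero hsum]
  have e1 : (fun y => ΓEps m ε y l j k) =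
      fun y => if ((j:ℕ) < m + 1 ∧ k = penIdx m ∧ l = lastIdx m) then -(2*ε) * y j else 0 :=
    funext (Γ_closed m ε h1 h2 j)
  have e2 : (fun y => ΓEps m ε y l i k) =
      fun y => if ((i:ℕ) < m + 1 ∧ k = penIdx m ∧ l = lastIdx m) then -(2*ε) * y i else 0 :=
    funext (Γ_closed m ε h1 h2 i)
  rw [e1, e2, pd_lin, pd_lin]
  have : (if (((j:ℕ) < m + 1 ∧ k = penIdx m ∧ l = lastIdx m) ∧ i = j) then -(2*ε) else 0) =
      (if (((i:ℕ) < m + 1 ∧ k = penIdx m ∧ l = lastIdx m) ∧ j = i) then -(2*ε) else 0) := by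
    split_ifs with hA hB hB <;> try rfl
    · exact absurd ⟨⟨hA.2.symm ▸ hA.1.1, hA.1.2.1, hA.1.2.2⟩, hA.2.symm⟩ hB
    · exact absurd ⟨⟨hB.2.symm ▸ hB.1.1, hB.1.2.1, hB.1.2.2⟩, hB.2.symm⟩ hA
  rw [this]; ring

lemma RMat_vanish (m : ℕ) (ε : ℝ) (x u v : Fin (m+3) → ℝ) {l k : Fin (m+3)}
    (h1 : ¬((l:ℕ) < m + 1 ∧ k = penIdx m))
    (h2 : ¬(l = lastIdx m ∧ (k : ℕ) < m + 1)) :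
    RMatEps m ε x u v l k = 0 := by
  show (∑ i, ∑ j, u i * v j * RopEps m ε x i j k l) = 0
  refine Finset.sum_eq_zero fun i _ => Finset.sum_eq_zero fun j _ => ?_
  rw [Rop_vanish m ε x i j k l h1 h2, mul_zero]

lemma RMat_cube (m : ℕ) (ε : ℝ) (x u v : Fin (m+3) → ℝ) :
    (RMatEps m ε x u v) ^ 3 = 0 := by
  set M := RMatEps m ε x u v with hMdef
  have hM : ∀ l k : Fin (m+3), ¬((l:ℕ) < m + 1 ∧ k = penIdx m) →
      ¬(l = lastIdx m ∧ (k:ℕ) < m + 1) → M l k = 0 :=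
    fun l k h1 h2 => RMat_vanish m ε x u v h1 h2
  have hpen : ∀ b, M (penIdx m) b = 0 := by
    intro b
    apply hM <;> simp only [penIdx, lastIdx, Fin.ext_iff, Fin.val_mk, not_and] <;> omega
  have hMM : ∀ a b : Fin (m+3), ¬(a = lastIdx m ∧ b = penIdx m) → (M * M) a b = 0 := by
    intro a b hab
    rw [Matrix.mul_apply]
    refine Finset.sum_eq_zero fun s _ => ?_
    by_cases hsp : s = penIdx m
    · subst hsp; rw [hpen b, mul_zero]
    by_cases hcase : a = lastIdx m ∧ (s:ℕ) < m + 1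
    · have hbp : b ≠ penIdx m := fun hb => hab ⟨hcase.1, hb⟩
      have : M s b = 0 := by
        apply hM
        · exact fun h => hbp h.2
        · intro h
          have := hcase.2
          rw [h.1] at this
          simp only [lastIdx, Fin.val_mk] at this
          omega
      rw [this, mul_zero]
    · have : M a s = 0 := by
        apply hM
        · exact fun h => hsp h.2
        · exact hcase
      rw [this, zero_mul]
  have h3 : M ^ 3 = M * M * M := by
    rw [pow_succ, pow_two]
  rw [h3]
  ext a d
  rw [Matrix.mul_apply, Matrix.zero_apply]
  refine Finset.sum_eq_zero fun s _ => ?_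
  by_cases h : a = lastIdx m ∧ s = penIdx m
  · rw [h.2, hpen d, mul_zero]
  · rw [hMM a s h, zero_mul]

end AuxIP

/-- for any nondegenerate oriented 2-plane `π = span{u,v}`, the
skew-symmetric curvature operator `R(π) = Ξ⁻¹ R(u,v)` of an ε-space is three-step
nilpotent, `R(π)³ = 0`; hence all its eigenvalues vanish, i.e. ε-spaces are
Ivanov–Petrova. -/
theorem eps_IP (m : ℕ) (ε : ℝ) (hε : ε = 1 ∨ ε = -1) :
    ∀ (x : Fin (m + 3) → ℝ) (u v : Fin (m + 3) → ℝ),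
      gdotEps m ε x u u * gdotEps m ε x v v - (gdotEps m ε x u v) ^ 2 ≠ 0 →
      ((Real.sqrt |gdotEps m ε x u u * gdotEps m ε x v v - (gdotEps m ε x u v) ^ 2|)⁻¹ •
          RMatEps m ε x u v) ^ 3 = 0 ∧
      (∀ (μ : ℝ) (w : Fin (m + 3) → ℝ), w ≠ 0 →
        ((Real.sqrt |gdotEps m ε x u u * gdotEps m ε x v v - (gdotEps m ε x u v) ^ 2|)⁻¹ •
          RMatEps m ε x u v).mulVec w = μ • w → μ = 0) := by
  intro x u v hnd
  set c := (Real.sqrt |gdotEps m ε x u u * gdotEps m ε x v v - (gdotEps m ε x u v) ^ 2|)⁻¹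
    with hc
  set A := c • RMatEps m ε x u v with hA
  have hcube : A ^ 3 = 0 := by
    rw [hA, smul_pow, RMat_cube m ε x u v, smul_zero]
  refine ⟨hcube, fun μ w hw hmu => ?_⟩
  have h3 : (A ^ 3).mulVec w = (μ * μ * μ) • w := by
    have e : A ^ 3 = A * (A * A) := by rw [pow_succ, pow_two, mul_assoc]
    rw [e, ← Matrix.mulVec_mulVec, ← Matrix.mulVec_mulVec, hmu, Matrix.mulVec_smul, hmu,
      smul_smul, Matrix.mulVec_smul, hmu, smul_smul]
  rw [hcube, Matrix.zero_mulVec] at h3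
  rcases smul_eq_zero.mp h3.symm with h | h
  · have : μ ^ 3 = 0 := by rw [pow_succ, pow_two]; exact h
    exact pow_eq_zero_iff (by norm_num : (3:ℕ) ≠ 0) |>.mp this
  · exact absurd h hw
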